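/- arXiv:2208.09476 — 3 statements merged into one kernel-verified Lean document; each statement's English description precedes it below -/
import Mathlib

section
/- Let G be a finite group and let f : G → ℚ be a function such that f(g) = f(h) whenever the cyclic subgroups generated by g and by h are conjugate in G. For a subgroup C of G let π_C : G → ℚ be the permutation character of G acting on the left coset space G/C, i.e., π_C(g) is the number of cosets xC with g·xC = xC. Then f is a ℚ-linear combination of the functions π_C with C ranging over the cyclic subgroups of G. -/
/-!
A function constant on the classes `g ~ h :↔ ⟨g⟩, ⟨h⟩ conjugate` is a combination of the class
indicators, so it suffices to reach each indicator `e_[g₀]`; we induct on the cyclic subgroup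
`⟨g₀⟩`. The permutation character `π_⟨g₀⟩` is constant on classes, is nonzero at `g₀` (the
trivial coset is fixed), and vanishes at every `g` with no conjugate in `⟨g₀⟩`. So `π_⟨g₀⟩` is a
nonzero multiple of `e_[g₀]` plus a combination of indicators `e_[g]` with `⟨g⟩` conjugate to a
proper subgroup of `⟨g₀⟩`, which lie in the span by induction.
-/
open Subgroup MulAction Pointwise

theorem ConjAct.toConjAct_smul_zpowers {G : Type*} [Group G] (x g : G) :
    toConjAct x • zpowers g = zpowers (x * g * x⁻¹) :=
  MonoidHom.map_zpowers (MulDistribMulAction.toMonoidHom G (toConjAct x)) g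

section ClassIndicator

variable {α K : Type*} [Semiring K] (s : Setoid α)

noncomputable def classIndicator (c : Quotient s) : α → K :=
  {a | Quotient.mk s a = c}.indicator 1

theorem sum_lift_smul_classIndicator [Fintype (Quotient s)] (f : α → K)
    (hf : ∀ a b, s a b → f a = f b) :
    ∑ c, Quotient.lift f hf c • classIndicator s c = f := by
  classical
  ext a
  simp [classIndicator, Finset.sum_apply, Set.indicator_apply]

end ClassIndicator

section CyclicConj

variable {G : Type*} [Group G]

variable (G) in
def zpowersConj : Setoid G :=
  (orbitRel (ConjAct G) (Subgroup G)).comap zpowers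

theorem zpowersConj_iff {g h : G} :
    zpowersConj G g h ↔ ∃ x : G, zpowers (x * h * x⁻¹) = zpowers g := by
  rw [zpowersConj, Setoid.comap_rel, orbitRel_apply, mem_orbit_iff]
  simp only [ConjAct.toConjAct.surjective.exists, ConjAct.toConjAct_smul_zpowers]

theorem zpowersConj_conj (x g : G) : zpowersConj G (x * g * x⁻¹) g :=
  zpowersConj_iff.2 ⟨x, rfl⟩

section PermChar

variable (X : Type*) [MulAction G X]

noncomputable def permChar (g : G) : ℚ := Nat.card (fixedBy X g)

theorem permChar_conj (x g : G) : permChar X (x * g * x⁻¹) = permChar X g := by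
  simp only [permChar, Nat.card_coe_set_eq, ← smul_fixedBy, Set.ncard_smul_set]

theorem permChar_eq_of_zpowers_eq {g h : G} (hgh : zpowers g = zpowers h) :
    permChar X g = permChar X h := by
  have : fixedBy X g = fixedBy X h := by
    ext a
    rw [mem_fixedBy, mem_fixedBy, ← mem_stabilizer_iff, ← mem_stabilizer_iff,
      ← zpowers_le, ← zpowers_le, hgh]
  rw [permChar, permChar, this]

theorem permChar_eq_of_zpowersConj {g h : G} (hgh : zpowersConj G g h) :
    permChar X g = permChar X h := by
  obtain ⟨x, hx⟩ := zpowersConj_iff.1 hgh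
  rw [← permChar_conj X x h, permChar_eq_of_zpowers_eq X hx]

end PermChar

theorem permChar_quotient_zpowers_self_ne_zero [Finite G] (g : G) :
    permChar (G ⧸ zpowers g) g ≠ 0 := by
  have hfix : ((1 : G) : G ⧸ zpowers g) ∈ fixedBy (G ⧸ zpowers g) g := by
    rw [mem_fixedBy, ← mem_stabilizer_iff, stabilizer_quotient]
    exact mem_zpowers g
  exact Nat.cast_ne_zero.2 (Nat.card_pos_iff.2 ⟨⟨_, hfix⟩, inferInstance⟩).ne'

theorem exists_conj_mem_of_permChar_quotient_ne_zero {C : Subgroup G} {g : G}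
    (h : permChar (G ⧸ C) g ≠ 0) : ∃ x : G, x * g * x⁻¹ ∈ C := by
  obtain ⟨⟨y, hy⟩⟩ := (Nat.card_ne_zero.1 (Nat.cast_ne_zero.1 h)).1
  induction y using QuotientGroup.induction_on with
  | H x =>
    rw [mem_fixedBy, MulAction.Quotient.smul_coe, QuotientGroup.eq] at hy
    exact ⟨x⁻¹, by simpa [mul_assoc] using C.inv_mem hy⟩

theorem exists_conj_zpowers_lt_of_permChar_ne_zero {g g₀ : G}
    (hg : ¬ zpowersConj G g g₀) (h : permChar (G ⧸ zpowers g₀) g ≠ 0) :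
    ∃ x : G, zpowers (x * g * x⁻¹) < zpowers g₀ := by
  obtain ⟨x, hx⟩ := exists_conj_mem_of_permChar_quotient_ne_zero h
  refine ⟨x, (zpowers_le.2 hx).lt_of_ne fun heq => hg ?_⟩
  exact (zpowersConj G).symm (zpowersConj_iff.2 ⟨x, heq⟩)

variable (G) in
def cyclicPermCharSpan : Submodule ℚ (G → ℚ) :=
  Submodule.span ℚ {π | ∃ C : Subgroup G, IsCyclic C ∧ π = permChar (G ⧸ C)}

theorem classIndicator_mem_cyclicPermCharSpan [Finite G] (g₀ : G) :
    classIndicator (zpowersConj G) ⟦g₀⟧ ∈ cyclicPermCharSpan G := by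
  classical
  have := Fintype.ofFinite (Quotient (zpowersConj G))
  induction hH : zpowers g₀ using WellFoundedLT.induction generalizing g₀ with
  | _ H ih =>
  subst hH
  set π : G → ℚ := permChar (G ⧸ zpowers g₀)
  set π' := Quotient.lift π fun _ _ => permChar_eq_of_zpowersConj (G ⧸ zpowers g₀)
  have hπ : π ∈ cyclicPermCharSpan G := Submodule.subset_span ⟨_, inferInstance, rfl⟩
  have hdecomp : π' ⟦g₀⟧ • classIndicator (zpowersConj G) ⟦g₀⟧ +
      ∑ c ∈ Finset.univ.erase ⟦g₀⟧, π' c • classIndicator (zpowersConj G) c = π :=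
    (Finset.add_sum_erase _ _ (Finset.mem_univ _)).trans (sum_lift_smul_classIndicator _ π _)
  have hrest : ∑ c ∈ Finset.univ.erase ⟦g₀⟧, π' c • classIndicator (zpowersConj G) c ∈
      cyclicPermCharSpan G := by
    refine Submodule.sum_mem _ fun c hc => ?_
    obtain ⟨g, rfl⟩ := Quotient.mk_surjective c
    by_cases hg : π g = 0
    · simp [π', hg]
    obtain ⟨x, hx⟩ := exists_conj_zpowers_lt_of_permChar_ne_zero
      (fun h => Finset.ne_of_mem_erase hc (Quotient.sound h)) hg
    rw [← Quotient.sound (zpowersConj_conj x g)]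
    exact Submodule.smul_mem _ _ (ih _ hx _ rfl)
  rw [← Submodule.smul_mem_iff _ (permChar_quotient_zpowers_self_ne_zero g₀)]
  have := Submodule.sub_mem _ hπ hrest
  rwa [← hdecomp, add_sub_cancel_right] at this

end CyclicConj

/-- Artin's induction formula, in the form used for L-series of Galois stratifications:
a `ℚ`-valued function on a finite group `G` that is constant on the classes determined by
conjugacy of the generated cyclic subgroups is a `ℚ`-linear combination of the permutation
characters `π_C : g ↦ #{x ∈ G/C | g·xC = xC}` of the coset spaces `G ⧸ C`, with `C` ranging
over cyclic subgroups of `G`. -/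
theorem artin_induction_permutation_characters (G : Type*) [Group G] [Finite G]
    (f : G → ℚ)
    (hf : ∀ g h : G,
      (∃ x : G, Subgroup.zpowers (x * g * x⁻¹) = Subgroup.zpowers h) → f g = f h) :
    f ∈ Submodule.span ℚ
      {π : G → ℚ | ∃ C : Subgroup G, IsCyclic C ∧
        π = fun g => (Nat.card {x : G ⧸ C // g • x = x} : ℚ)} := by
  have := Fintype.ofFinite (Quotient (zpowersConj G))
  have hf' (g h : G) (hgh : zpowersConj G g h) : f g = f h :=
    (hf h g (zpowersConj_iff.1 hgh)).symm
  rw [← sum_lift_smul_classIndicator _ f hf']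
  refine Submodule.sum_mem _ fun c _ => Submodule.smul_mem _ _ ?_
  obtain ⟨g, rfl⟩ := Quotient.mk_surjective c
  exact classIndicator_mem_cyclicPermCharSpan g
end

section
/- Let Z ∈ ℚ[[t]] be the unique formal power series with constant coefficient 1 satisfying the differential equation 2·(1 − t)·(dZ/dt) = Z (so Z = (1 − t)^{−1/2}). Then the associated Poincaré series P = t·(dZ/dt)·Z⁻¹ equals t/(2·(1 − t)) and in particular is rational, but Z itself is not rational. -/
/-!
Multiplying the equation `2 (1 - t) Z' = Z` by `Z⁻¹` gives the Poincaré series `t / (2 (1 - t))`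
at once. Multiplying it by `Z` instead shows that `Z² (1 - t)` has derivative zero, so
`Z² (1 - t) = 1`. If `b Z = a` with polynomials `a`, `b ≠ 0`, then `b² = a² (1 - t)`, which is
impossible because the two sides have degrees of different parity.
-/

open PowerSeries

namespace PowerSeries

variable {R K : Type*}

def IsRational [CommSemiring R] (F : R⟦X⟧) : Prop :=
  ∃ a b : Polynomial R, b ≠ 0 ∧ (b : R⟦X⟧) * F = a

theorem isRational_coe_mul_inv [Field K] (p q : Polynomial K) (hq : q.coeff 0 ≠ 0) :
    IsRational ((p : K⟦X⟧) * (q : K⟦X⟧)⁻¹) := by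
  refine ⟨p, q, fun h ↦ hq (by simp [h]), ?_⟩
  have hq' : constantCoeff (q : K⟦X⟧) ≠ 0 := by simpa using hq
  rw [mul_left_comm, PowerSeries.mul_inv_cancel _ hq', mul_one]

theorem not_isRational_of_sq_mul_eq_one [CommRing R] [IsDomain R] {Z : R⟦X⟧}
    {p : Polynomial R} (hp : Odd p.natDegree) (hZ : Z ^ 2 * p = 1) : ¬ IsRational Z := by
  rintro ⟨a, b, hb, hab⟩
  have hp0 : p ≠ 0 := by rintro rfl; simp at hp
  have hpoly : b ^ 2 = a ^ 2 * p := Polynomial.coe_injective R <| by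
    push_cast
    rw [← hab, mul_pow, mul_assoc, hZ, mul_one]
  have ha : a ≠ 0 := by
    rintro rfl
    exact hb (by simpa using hpoly)
  have hdeg := congrArg Polynomial.natDegree hpoly
  rw [Polynomial.natDegree_pow, Polynomial.natDegree_mul (pow_ne_zero 2 ha) hp0,
    Polynomial.natDegree_pow] at hdeg
  obtain ⟨k, hk⟩ := hp
  omega

theorem derivative_mul_inv_eq_inv_of_mul_derivative_eq [Field K] {Z u : K⟦X⟧}
    (hZ : constantCoeff Z ≠ 0) (hu : constantCoeff u ≠ 0) (hODE : u * d⁄dX K Z = Z) :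
    d⁄dX K Z * Z⁻¹ = u⁻¹ := by
  rw [PowerSeries.eq_inv_iff_mul_eq_one hu]
  calc d⁄dX K Z * Z⁻¹ * u = u * d⁄dX K Z * Z⁻¹ := by ring
    _ = 1 := by rw [hODE, PowerSeries.mul_inv_cancel _ hZ]

theorem sq_mul_one_sub_X_eq_one [CommRing R] [IsAddTorsionFree R] {Z : R⟦X⟧}
    (hZ0 : constantCoeff Z = 1) (hODE : 2 * (1 - X) * d⁄dX R Z = Z) :
    Z ^ 2 * (1 - X) = 1 := by
  refine derivative.ext ?_ (by simp [hZ0])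
  calc d⁄dX R (Z ^ 2 * (1 - X)) = Z * (2 * (1 - X) * d⁄dX R Z) - Z ^ 2 := by
        simp only [Derivation.leibniz, Derivation.leibniz_pow, map_sub, Derivation.map_one_eq_zero,
          derivative_X, smul_eq_mul]
        ring
    _ = d⁄dX R 1 := by rw [hODE, Derivation.map_one_eq_zero]; ring

end PowerSeries

/-- The zeta function `Z = (1 − t)^{−1/2}`, characterized as the power series with
`Z(0) = 1` satisfying `2·(1 − t)·Z′ = Z`, has a rational Poincaré series
`P = t·Z′/Z = t/(2·(1 − t))`, while `Z` itself is not rational: rationality of the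
Poincaré series does not imply rationality of the zeta function. -/
theorem poincare_rational_zeta_not_rational (Z : PowerSeries ℚ)
    (hZ0 : PowerSeries.constantCoeff Z = 1)
    (hODE : 2 * (1 - PowerSeries.X) * (d⁄dX ℚ Z) = Z) :
    PowerSeries.X * (d⁄dX ℚ Z) * Z⁻¹ =
      PowerSeries.X * (2 * (1 - PowerSeries.X))⁻¹ ∧
    (∃ a b : Polynomial ℚ, b ≠ 0 ∧
      (b : PowerSeries ℚ) * (PowerSeries.X * (d⁄dX ℚ Z) * Z⁻¹) = (a : PowerSeries ℚ)) ∧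
    ¬ (∃ a b : Polynomial ℚ, b ≠ 0 ∧
      (b : PowerSeries ℚ) * Z = (a : PowerSeries ℚ)) := by
  have hPoincare : X * d⁄dX ℚ Z * Z⁻¹ = X * (2 * (1 - X))⁻¹ := by
    rw [mul_assoc,
      derivative_mul_inv_eq_inv_of_mul_derivative_eq (by simp [hZ0]) (by simp [map_ofNat]) hODE]
  refine ⟨hPoincare, ?_, ?_⟩
  · have hcoe : ((2 * (1 - Polynomial.X) : Polynomial ℚ) : ℚ⟦X⟧) = 2 * (1 - X) := by
      rw [Polynomial.coe_mul, Polynomial.coe_sub, Polynomial.coe_one, Polynomial.coe_X]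
      exact congrArg (· * (1 - X)) (map_ofNat Polynomial.coeToPowerSeries.ringHom 2)
    rw [hPoincare, ← hcoe, ← Polynomial.coe_X]
    exact isRational_coe_mul_inv _ _ (by simp)
  · refine not_isRational_of_sq_mul_eq_one (p := 1 - Polynomial.X) ?_ ?_
    · rw [show (1 - Polynomial.X : Polynomial ℚ).natDegree = 1 by compute_degree!]
      exact odd_one
    · simpa using sq_mul_one_sub_X_eq_one hZ0 hODE
end

section
/- Let f ∈ ℤ[X] be a monic irreducible polynomial of degree ≥ 1. Then there are infinitely many primes p such that the image of f in (ZMod p)[X] is squarefree and splits into linear factors (i.e., f splits completely into distinct linear factors modulo p). -/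
/-!
Let `K` be the splitting field of `f` over `ℚ` and `θ ∈ K` an integral primitive element with
minimal polynomial `g ∈ ℤ[X]`. Schur's argument gives roots of `g` modulo infinitely many primes
`p`, and each such root is a ring map `ℤ[θ] → 𝔽_p`. The discriminant `D` of the power basis of
`θ` satisfies `D • 𝓞_K ⊆ ℤ[θ]`, so for `p ∤ D` the roots of `f`, scaled by `D`, are mapped to
`𝔽_p` and `f` splits modulo `p`. For `p` not dividing `Res(f, f')`, a Bézout identity
`a f + b f' = Res(f, f')` shows that `f` stays separable, hence squarefree, modulo `p`.
-/

open Polynomial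

namespace Polynomial

theorem splits_map_of_mul_roots_mem {R K F : Type*} [CommRing R] [Field K] [Algebra R K]
    [Field F] [Algebra R F] {f : R[X]} (hf : f.Monic) (hsplit : (f.map (algebraMap R K)).Splits)
    (O : Subalgebra R K) (d : R)
    (hd : ∀ α ∈ (f.map (algebraMap R K)).roots, algebraMap R K d * α ∈ O)
    (ψ : O →ₐ[R] F) (hdF : algebraMap R F d ≠ 0) :
    (f.map (algebraMap R F)).Splits := by
  have hdK : algebraMap R K d ≠ 0 := fun h ↦ hdF <| by
    rw [← ψ.commutes, show algebraMap R O d = 0 from Subtype.ext h, map_zero]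
  set g := f.scaleRoots d
  have hgK : (g.map (algebraMap R K)).Splits ∧ ∀ β ∈ (g.map (algebraMap R K)).roots, β ∈ O := by
    rw [map_scaleRoots _ _ _ (by simp [hf.leadingCoeff]),
      roots_scaleRoots _ (isUnit_iff_ne_zero.mpr hdK)]
    refine ⟨hsplit.scaleRoots _, ?_⟩
    rintro _ hβ
    obtain ⟨α, hα, rfl⟩ := Multiset.mem_map.mp hβ
    exact hd α hα
  have hgO : (g.map (algebraMap R O)).Splits := by
    refine Splits.of_splits_map_of_injective (i := algebraMap O K) Subtype.val_injective ?_ ?_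
    · rw [map_map, ← IsScalarTower.algebraMap_eq]; exact hgK.1
    · rw [map_map, ← IsScalarTower.algebraMap_eq]
      intro β hβ
      exact ⟨⟨β, hgK.2 β hβ⟩, rfl⟩
  have hgF : ((f.map (algebraMap R F)).scaleRoots (algebraMap R F d)).Splits := by
    rw [← map_scaleRoots _ _ _ (by simp [hf.leadingCoeff]), ← ψ.comp_algebraMap, ← map_map]
    exact hgO.map _
  simpa [← scaleRoots_mul, mul_inv_cancel₀ hdF] using hgF.scaleRoots (algebraMap R F d)⁻¹

theorem resultant_derivative_ne_zero_of_separable_map {R S : Type*} [CommRing R] [CommRing S]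
    [IsDomain S] {φ : R →+* S} (hφ : Function.Injective φ) {f : R[X]} (hf : (f.map φ).Separable) :
    f.resultant (derivative f) ≠ 0 := by
  have h := resultant_ne_zero _ _ hf
  rw [derivative_map, natDegree_map_eq_of_injective hφ,
    natDegree_map_eq_of_injective hφ, resultant_map_map] at h
  exact fun h0 ↦ h (by rw [h0, map_zero])

theorem separable_map_of_isUnit_resultant {R S : Type*} [CommRing R] [CommRing S] {f : R[X]}
    (hf : 0 < f.natDegree) (φ : R →+* S) (h : IsUnit (φ (f.resultant (derivative f)))) :
    (f.map φ).Separable := by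
  obtain ⟨a, b, -, -, hab⟩ :=
    exists_mul_add_mul_eq_C_resultant f (derivative f) le_rfl le_rfl (.inl hf.ne')
  refine ⟨C (↑h.unit⁻¹ : S) * a.map φ, C (↑h.unit⁻¹ : S) * b.map φ, ?_⟩
  have := congrArg (map φ) hab
  rw [Polynomial.map_add, Polynomial.map_mul, Polynomial.map_mul, map_C, ← derivative_map] at this
  rw [mul_assoc, mul_assoc, ← mul_add, mul_comm (a.map φ), mul_comm (b.map φ), this, ← map_mul,
    h.val_inv_mul, map_one]

theorem exists_natAbs_eval_ne_one {h : ℤ[X]} (hh : 0 < h.natDegree) :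
    ∃ t : ℤ, (h.eval t).natAbs ≠ 1 := by
  by_contra! H
  have hcover : Set.univ ⊆ {t | h.eval t = (C 1).eval t} ∪ {t | h.eval t = (C (-1)).eval t} :=
    fun t _ ↦ by simpa using Int.natAbs_eq_iff.mp (H t)
  rcases Set.infinite_union.mp (Set.infinite_univ.mono hcover) with h1 | h1 <;>
    · have := congrArg natDegree (eq_of_infinite_eval_eq _ _ h1)
      simp only [natDegree_C] at this
      omega

theorem exists_prime_not_dvd_and_dvd_eval {g : ℤ[X]} (hg : 0 < g.natDegree) {M : ℤ}
    (hM : M ≠ 0) : ∃ p : ℕ, p.Prime ∧ ¬ (p : ℤ) ∣ M ∧ ∃ n : ℤ, (p : ℤ) ∣ g.eval n := by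
  set c := g.eval 0
  by_cases hc : c = 0
  · obtain ⟨p, hMp, hp⟩ := Nat.exists_infinite_primes (M.natAbs + 1)
    refine ⟨p, hp, fun hpM ↦ ?_, 0, by rw [show g.eval 0 = 0 from hc]; exact dvd_zero _⟩
    have := Nat.le_of_dvd (Int.natAbs_pos.mpr hM) (Int.natCast_dvd.mp hpM)
    omega
  obtain ⟨k, hk⟩ : X ∣ g - C c := by simp [X_dvd_iff, c, coeff_zero_eq_eval_zero]
  -- `g (c M X) = c H(X)` with `H ≡ 1 mod M`, so prime factors of values of `H` avoid `M`.
  set H : ℤ[X] := 1 + C M * X * k.comp (C (c * M) * X)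
  have hgH : g.comp (C (c * M) * X) = C c * H := by
    rw [sub_eq_iff_eq_add'] at hk
    rw [hk]
    simp only [add_comp, mul_comp, C_comp, X_comp, H, C_mul]
    ring
  have hH : 0 < H.natDegree := by
    have := congrArg natDegree hgH
    rw [natDegree_comp, natDegree_C_mul_X _ (mul_ne_zero hc hM), mul_one,
      natDegree_C_mul hc] at this
    omega
  obtain ⟨t, ht⟩ := exists_natAbs_eval_ne_one hH
  obtain ⟨q, hq, hqH⟩ := Int.exists_prime_and_dvd ht
  refine ⟨q.natAbs, Int.prime_iff_natAbs_prime.mp hq, fun hqM ↦ ?_, c * M * t, ?_⟩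
  · have : (q.natAbs : ℤ) ∣ H.eval t - M * (t * (k.comp (C (c * M) * X)).eval t) :=
      dvd_sub (Int.natAbs_dvd.mpr hqH) (hqM.mul_right _)
    simp only [H, eval_add, eval_one, eval_mul, eval_C, eval_X, add_sub_assoc, mul_assoc,
      sub_self, add_zero] at this
    have := Int.eq_one_of_dvd_one (by positivity) this
    exact (Int.prime_iff_natAbs_prime.mp hq).one_lt.ne' (by exact_mod_cast this)
  · have := congrArg (eval t) hgH
    simp only [eval_comp, eval_mul, eval_C, eval_X] at this
    rw [this]
    exact (Int.natAbs_dvd.mpr hqH).mul_left c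

end Polynomial

theorem exists_isIntegral_adjoin_eq_top (K : Type*) [Field K] [Algebra ℚ K]
    [FiniteDimensional ℚ K] : ∃ θ : K, IsIntegral ℤ θ ∧ Algebra.adjoin ℚ {θ} = ⊤ := by
  obtain ⟨θ₀, hθ₀⟩ := Field.exists_primitive_element ℚ K
  have htop :=
    Algebra.adjoin_eq_top_of_primitive_element (Algebra.IsAlgebraic.isAlgebraic θ₀) hθ₀
  obtain ⟨d, hd, hint⟩ := ((IsFractionRing.isAlgebraic_iff ℤ ℚ K).mpr
    (Algebra.IsAlgebraic.isAlgebraic θ₀)).exists_integral_multiple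
  refine ⟨d • θ₀, hint, eq_top_iff.mpr (htop ▸ Algebra.adjoin_le ?_)⟩
  rw [Set.singleton_subset_iff, SetLike.mem_coe]
  convert Subalgebra.smul_mem _ (Algebra.self_mem_adjoin_singleton ℚ (d • θ₀)) (d : ℚ)⁻¹
  rw [← Int.cast_smul_eq_zsmul ℚ d θ₀, smul_smul, inv_mul_cancel₀ (by exact_mod_cast hd), one_smul]

theorem exists_int_mul_mem_adjoin_of_isIntegral {K : Type*} [Field K] [Algebra ℚ K]
    [FiniteDimensional ℚ K] {θ : K} (hθ : IsIntegral ℤ θ) (hgen : Algebra.adjoin ℚ {θ} = ⊤) :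
    ∃ D : ℤ, D ≠ 0 ∧ ∀ z : K, IsIntegral ℤ z → (D : K) * z ∈ Algebra.adjoin ℤ {θ} := by
  classical
  set B := PowerBasis.ofAdjoinEqTop hθ.tower_top hgen
  have hB : B.gen = θ := PowerBasis.ofAdjoinEqTop_gen _ _
  obtain ⟨D, hD⟩ := IsIntegrallyClosed.isIntegral_iff.mp <|
    Algebra.discr_isIntegral ℚ (R := ℤ) (b := B.basis) fun i ↦ by
      rw [B.basis_eq_pow, hB]; exact hθ.pow _
  refine ⟨D, fun h ↦ Algebra.discr_not_zero_of_basis ℚ B.basis (by rw [← hD, h, map_zero]),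
    fun z hz ↦ ?_⟩
  have := Algebra.discr_mul_isIntegral_mem_adjoin ℚ (hB ▸ hθ) hz
  rwa [← hD, hB, algebraMap_smul, zsmul_eq_mul] at this

theorem nonempty_adjoin_algHom_zmod_of_dvd_eval {S : Type*} [CommRing S] [IsDomain S]
    [CharZero S] {θ : S} (hθ : IsIntegral ℤ θ) {p : ℕ} {n : ℤ}
    (hn : (p : ℤ) ∣ (minpoly ℤ θ).eval n) :
    Nonempty (Algebra.adjoin ℤ {θ} →ₐ[ℤ] ZMod p) := by
  refine ⟨(AdjoinRoot.liftAlgHom _ (Algebra.ofId ℤ (ZMod p)) n ?_).comp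
    (minpoly.equivAdjoin hθ).symm.toAlgHom⟩
  change eval₂ (Int.castRingHom (ZMod p)) (Int.castRingHom (ZMod p) n) _ = 0
  rwa [eval₂_at_apply, eq_intCast, ZMod.intCast_zmod_eq_zero_iff_dvd]

/-- The elementary case of the Chebotarev density theorem used in the paper: a monic
irreducible polynomial over `ℤ` of degree at least `1` splits completely into distinct
linear factors modulo infinitely many primes `p`. -/
theorem infinitely_many_split_primes (f : Polynomial ℤ) (hmonic : f.Monic)
    (hirr : Irreducible f) (hdeg : 1 ≤ f.natDegree) :
    {p : ℕ | ∃ hp : p.Prime,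
      haveI : Fact p.Prime := ⟨hp⟩
      Squarefree (f.map (Int.castRingHom (ZMod p))) ∧
        Polynomial.Splits
          (f.map (Int.castRingHom (ZMod p)))}.Infinite := by
  set K := (f.map (algebraMap ℤ ℚ)).SplittingField
  have hsplit : (f.map (algebraMap ℤ K)).Splits := by
    rw [IsScalarTower.algebraMap_eq ℤ ℚ K, ← map_map]; exact SplittingField.splits _
  have hΔ : f.resultant (derivative f) ≠ 0 :=
    resultant_derivative_ne_zero_of_separable_map (IsFractionRing.injective ℤ ℚ)
      (hmonic.irreducible_iff_irreducible_map_fraction_map.mp hirr).separable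
  obtain ⟨θ, hθ, hgen⟩ := exists_isIntegral_adjoin_eq_top K
  obtain ⟨D, hD, hDθ⟩ := exists_int_mul_mem_adjoin_of_isIntegral hθ hgen
  refine Set.infinite_of_forall_exists_gt fun N ↦ ?_
  obtain ⟨p, hp, hpM, n, hn⟩ := exists_prime_not_dvd_and_dvd_eval (minpoly.natDegree_pos hθ)
    (M := N.factorial * f.resultant (derivative f) * D)
    (mul_ne_zero (mul_ne_zero (mod_cast N.factorial_ne_zero) hΔ) hD)
  have hpp : Prime (p : ℤ) := Nat.prime_iff_prime_int.mp hp
  simp only [hpp.dvd_mul, not_or, Int.natCast_dvd_natCast, hp.dvd_factorial, not_le] at hpM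
  obtain ⟨⟨hpN, hpΔ⟩, hpD⟩ := hpM
  have : Fact p.Prime := ⟨hp⟩
  obtain ⟨ψ⟩ := nonempty_adjoin_algHom_zmod_of_dvd_eval hθ hn
  refine ⟨p, ⟨hp, ?_, ?_⟩, hpN⟩
  · refine (separable_map_of_isUnit_resultant hdeg _ ?_).squarefree
    simpa [ZMod.intCast_zmod_eq_zero_iff_dvd] using hpΔ
  · rw [← algebraMap_int_eq]
    refine splits_map_of_mul_roots_mem hmonic hsplit _ D (fun α hα ↦ hDθ α ?_) ψ ?_
    · exact ⟨f, hmonic, by rw [eval₂_eq_eval_map]; exact (mem_roots'.mp hα).2⟩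
    · simpa [ZMod.intCast_zmod_eq_zero_iff_dvd] using hpD
end
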